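/- Let C be a locally finite, Krull-Schmidt, K-linear extriangulated category (K a field) with dim_K Hom_C(X,Y) < ∞ and dim_K E(X,Y) < ∞ for all X,Y ∈ C. If X ∈ Ind(C) is a non-projective object, then S(X) has a minimal element with respect to the relation >, i.e. an element s ∈ S(X) such that t > s for every t ∈ S(X). Dually, if X ∈ Ind(C) is a non-injective object, then S'(X) has a minimal element. -/

import Mathlib

open CategoryTheory CategoryTheory.Limits Opposite ZeroObject

attribute [local instance] CategoryTheory.Limits.hasBinaryBiproducts_of_finite_biproducts

universe w v u

noncomputable section

/-- An object of a preadditive category with finite biproducts is *indecomposable* if it is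
nonzero and admits no nontrivial direct sum decomposition. -/
def Indec {C : Type u} [Category.{v} C] [Preadditive C] [HasFiniteBiproducts C] (X : C) : Prop :=
  ¬ IsZero X ∧ ∀ (Y Z : C), Nonempty (X ≅ Y ⊞ Z) → IsZero Y ∨ IsZero Z

/-- A preadditive category is *Krull-Schmidt* if every object is (isomorphic to) a finite
biproduct of objects having local endomorphism rings. -/
def IsKrullSchmidt (C : Type u) [Category.{v} C] [Preadditive C] [HasFiniteBiproducts C] : Prop :=
  ∀ X : C, ∃ (n : ℕ) (f : Fin n → C),
    (∀ i, IsLocalRing (CategoryTheory.End (f i))) ∧ Nonempty (X ≅ ⨁ f)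

/-- `C` is *locally finite*: for every indecomposable `A` there are, up to isomorphism, only
finitely many indecomposables `B` with `Hom(A, B) ≠ 0`, and only finitely many indecomposables
`B` with `Hom(B, A) ≠ 0`. -/
def LocFinite (C : Type u) [Category.{v} C] [Preadditive C] [HasFiniteBiproducts C] : Prop :=
  ∀ A : C, Indec A →
    (∃ (n : ℕ) (ind : Fin n → C), ∀ B : C, Indec B → (∃ φ : A ⟶ B, φ ≠ 0) →
        ∃ i, Nonempty (B ≅ ind i)) ∧
    (∃ (n : ℕ) (ind : Fin n → C), ∀ B : C, Indec B → (∃ φ : B ⟶ A, φ ≠ 0) →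
        ∃ i, Nonempty (B ≅ ind i))

section ExtCatDef

variable (K : Type w) [Field K]
variable (C : Type u) [Category.{v} C] [Preadditive C] [Linear K C] [HasFiniteBiproducts C]

/-- An extriangulated structure (in the sense of Nakaoka–Palu) on the `K`-linear category `C`,
with `K`-linear extension groups: a biadditive functor `E : Cᵒᵖ × C → Ab` (here landing in
`K`-modules, recording the `K`-linear structure on the extension groups) together with an
additive realization `real` of extensions by conflations, satisfying (ET1)–(ET4) and their
duals. -/
structure ExtCat where
  /-- the biadditive functor `E : Cᵒᵖ × C → Ab`. -/
  E : Cᵒᵖ ⥤ C ⥤ ModuleCat.{v} K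
  additive₁ : E.Additive
  additive₂ : ∀ c : Cᵒᵖ, (E.obj c).Additive
  /-- `real x y δ` says that the sequence `x, y` realizes the extension `δ`, i.e.
  `(x, y, δ)` is an `E`-triangle. -/
  real : ∀ {a b c : C}, (a ⟶ b) → (b ⟶ c) → ((E.obj (op c)).obj a) → Prop
  /-- every extension is realized by some conflation. -/
  real_exists : ∀ {a c : C} (δ : (E.obj (op c)).obj a),
    ∃ (b : C) (x : a ⟶ b) (y : b ⟶ c), real x y δ
  /-- the realization is well defined on equivalence classes of sequences. -/
  real_congr : ∀ {a b b' c : C} {x : a ⟶ b} {y : b ⟶ c} {x' : a ⟶ b'} {y' : b' ⟶ c}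
    {δ : (E.obj (op c)).obj a} (e : b ≅ b'),
      x ≫ e.hom = x' → e.hom ≫ y' = y → real x y δ → real x' y' δ
  /-- any two realizations of the same extension are equivalent sequences. -/
  real_unique : ∀ {a b b' c : C} {x : a ⟶ b} {y : b ⟶ c} {x' : a ⟶ b'} {y' : b' ⟶ c}
    {δ : (E.obj (op c)).obj a}, real x y δ → real x' y' δ →
      ∃ e : b ≅ b', x ≫ e.hom = x' ∧ e.hom ≫ y' = y
  /-- (ET2) realization of morphisms of extensions: if `f_* δ = g^* δ'` then `(f, g)` extends to
  a morphism of the realizing `E`-triangles. -/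
  real_lift : ∀ {a b c a' b' c' : C} {x : a ⟶ b} {y : b ⟶ c} {x' : a' ⟶ b'} {y' : b' ⟶ c'}
    {δ : (E.obj (op c)).obj a} {δ' : (E.obj (op c')).obj a'} (f : a ⟶ a') (g : c ⟶ c'),
      real x y δ → real x' y' δ' →
      ((E.obj (op c)).map f) δ = ((E.map g.op).app a') δ' →
      ∃ m : b ⟶ b', x ≫ m = f ≫ x' ∧ m ≫ y' = y ≫ g
  /-- the realization is additive, part (i): split extensions are realized by split sequences. -/
  real_zero : ∀ a c : C,
    real (biprod.inl : a ⟶ a ⊞ c) (biprod.snd : a ⊞ c ⟶ c) (0 : (E.obj (op c)).obj a)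
  /-- the realization is additive, part (ii): it commutes with direct sums. -/
  real_sum : ∀ {a b c a' b' c' : C} {x : a ⟶ b} {y : b ⟶ c} {x' : a' ⟶ b'} {y' : b' ⟶ c'}
    {δ : (E.obj (op c)).obj a} {δ' : (E.obj (op c')).obj a'},
      real x y δ → real x' y' δ' →
      real (biprod.map x x') (biprod.map y y')
        (((E.map (biprod.fst : c ⊞ c' ⟶ c).op).app (a ⊞ a'))
            (((E.obj (op c)).map (biprod.inl : a ⟶ a ⊞ a')) δ) +
         ((E.map (biprod.snd : c ⊞ c' ⟶ c').op).app (a ⊞ a'))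
            (((E.obj (op c')).map (biprod.inr : a' ⟶ a ⊞ a')) δ'))
  /-- (ET3). -/
  et3 : ∀ {a b c a' b' c' : C} {x : a ⟶ b} {y : b ⟶ c} {x' : a' ⟶ b'} {y' : b' ⟶ c'}
    {δ : (E.obj (op c)).obj a} {δ' : (E.obj (op c')).obj a'} (f : a ⟶ a') (m : b ⟶ b'),
      real x y δ → real x' y' δ' → x ≫ m = f ≫ x' →
      ∃ g : c ⟶ c', y ≫ g = m ≫ y' ∧ ((E.obj (op c)).map f) δ = ((E.map g.op).app a') δ'
  /-- (ET3)ᵒᵖ. -/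
  et3op : ∀ {a b c a' b' c' : C} {x : a ⟶ b} {y : b ⟶ c} {x' : a' ⟶ b'} {y' : b' ⟶ c'}
    {δ : (E.obj (op c)).obj a} {δ' : (E.obj (op c')).obj a'} (g : c ⟶ c') (m : b ⟶ b'),
      real x y δ → real x' y' δ' → m ≫ y' = y ≫ g →
      ∃ f : a ⟶ a', x ≫ m = f ≫ x' ∧ ((E.obj (op c)).map f) δ = ((E.map g.op).app a') δ'
  /-- (ET4). -/
  et4 : ∀ {A B D F G : C} {f : A ⟶ B} {f' : B ⟶ D} {g : B ⟶ G} {g' : G ⟶ F}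
    {δ : (E.obj (op D)).obj A} {δ' : (E.obj (op F)).obj B},
      real f f' δ → real g g' δ' →
      ∃ (Eo : C) (d : D ⟶ Eo) (e : Eo ⟶ F) (h' : G ⟶ Eo) (δ'' : (E.obj (op Eo)).obj A),
        real (f ≫ g) h' δ'' ∧ f' ≫ d = g ≫ h' ∧ h' ≫ e = g' ∧
        real d e (((E.obj (op F)).map f') δ') ∧
        ((E.map d.op).app A) δ'' = δ ∧
        ((E.obj (op Eo)).map f) δ'' = ((E.map e.op).app B) δ'
  /-- (ET4)ᵒᵖ. -/
  et4op : ∀ {A B D F Cc : C} {f' : D ⟶ A} {f : A ⟶ B} {g' : F ⟶ B} {g : B ⟶ Cc}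
    {δ : (E.obj (op B)).obj D} {δ' : (E.obj (op Cc)).obj F},
      real f' f δ → real g' g δ' →
      ∃ (Eo : C) (d : D ⟶ Eo) (e : Eo ⟶ F) (h' : Eo ⟶ A) (δ'' : (E.obj (op Cc)).obj Eo),
        real h' (f ≫ g) δ'' ∧ d ≫ h' = f' ∧ h' ≫ f = e ≫ g' ∧
        real d e (((E.map g'.op).app D) δ) ∧
        ((E.obj (op Cc)).map e) δ'' = δ' ∧
        ((E.obj (op B)).map d) δ = ((E.map g.op).app Eo) δ''

end ExtCatDef

namespace ExtCat

variable {K : Type w} [Field K]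
variable {C : Type u} [Category.{v} C] [Preadditive C] [Linear K C] [HasFiniteBiproducts C]
variable (ξ : ExtCat K C)

/-- The extension group `E(c, a)`. -/
abbrev Ext (c a : C) : Type v := (ξ.E.obj (op c)).obj a

/-- Pushforward `f_* : E(c, a) → E(c, a')` along `f : a ⟶ a'`. -/
def push (c : C) {a a' : C} (f : a ⟶ a') (δ : ξ.Ext c a) : ξ.Ext c a' :=
  ((ξ.E.obj (op c)).map f) δ

/-- Pullback `g^* : E(c, a) → E(c', a)` along `g : c' ⟶ c`. -/
def pull (a : C) {c c' : C} (g : c' ⟶ c) (δ : ξ.Ext c a) : ξ.Ext c' a :=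
  ((ξ.E.map g.op).app a) δ

/-- An object `P` is projective if `E(P, A) = 0` for all `A`. -/
def ProjObj (P : C) : Prop := ∀ (A : C) (δ : ξ.Ext P A), δ = 0

/-- An object `I` is injective if `E(A, I) = 0` for all `A`. -/
def InjObj (I : C) : Prop := ∀ (A : C) (δ : ξ.Ext A I), δ = 0

end ExtCat

section STermDefs

variable {K : Type w} [Field K]
variable {C : Type u} [Category.{v} C] [Preadditive C] [HasFiniteBiproducts C]

/-- An element of the set `S(X)`: a non-split `E`-triangle `A ⟶ B ⟶ X` ending at `X`
whose first term `A` is indecomposable. -/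
structure STerm (ξ : ExtCat K C) (X : C) where
  A : C
  B : C
  f : A ⟶ B
  g : B ⟶ X
  δ : ξ.Ext X A
  isReal : ξ.real f g δ
  nonsplit : δ ≠ 0
  indec : Indec A

/-- `s > t` in `S(X)`: there is `f : A_s ⟶ A_t` with `f_* δ_s = δ_t`, i.e. a morphism of
`E`-triangles from `s` to `t` restricting to the identity on `X`. -/
def STerm.Gt {ξ : ExtCat K C} {X : C} (s t : STerm ξ X) : Prop :=
  ∃ f : s.A ⟶ t.A, ξ.push X f s.δ = t.δ

/-- `s ∼ t` in `S(X)`: such an `f` can be chosen to be an isomorphism. -/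
def STerm.Sim {ξ : ExtCat K C} {X : C} (s t : STerm ξ X) : Prop :=
  ∃ f : s.A ⟶ t.A, IsIso f ∧ ξ.push X f s.δ = t.δ

/-- An element of the set `S'(X)`: a non-split `E`-triangle `X ⟶ B ⟶ A` starting at `X`
whose last term `A` is indecomposable. -/
structure SPrimeTerm (ξ : ExtCat K C) (X : C) where
  A : C
  B : C
  f : X ⟶ B
  g : B ⟶ A
  δ : ξ.Ext A X
  isReal : ξ.real f g δ
  nonsplit : δ ≠ 0
  indec : Indec A

/-- `s > t` in `S'(X)`: there is `f : A_t ⟶ A_s` with `f^* δ_s = δ_t`. -/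
def SPrimeTerm.Gt {ξ : ExtCat K C} {X : C} (s t : SPrimeTerm ξ X) : Prop :=
  ∃ f : t.A ⟶ s.A, ξ.pull X f s.δ = t.δ

/-- `s ∼ t` in `S'(X)`: such an `f` can be chosen to be an isomorphism. -/
def SPrimeTerm.Sim {ξ : ExtCat K C} {X : C} (s t : SPrimeTerm ξ X) : Prop :=
  ∃ f : t.A ⟶ s.A, IsIso f ∧ ξ.pull X f s.δ = t.δ

end STermDefs

/-!
`S(X)` is nonempty: a nonzero extension of `X` stays nonzero after pushing it out to some
indecomposable summand of its first term. Fix `s₀ ∈ S(X)`. Every `t` with `s₀ > t` via `u` has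
`u ≠ 0`, so by local finiteness `A_t` is one of finitely many indecomposables and hence a retract
of a fixed object `D`. A pair `(t, u)` for which the image of `u^* : Hom(A_t, D) → Hom(A_{s₀}, D)`
is minimal gives a minimal element `m` of `S(X)`: `m > t` implies `t > m`.

Minimality and locality of `End(A_m)` make `δ_m` left almost split: every `a : A_m ⟶ V` with
`a_* δ_m ≠ 0` is a split mono. Now let `t ∈ S(X)`. If `g_t^* δ_m = 0`, then `δ_m` is a pushout of
`δ_t`. Otherwise, since `End(X)` is local, comparing the triangle of `g_t^* δ_m` with `m` yields an
automorphism `ζ` of `X` fixing `δ_m` such that `g_m ≫ ζ` factors through `g_t`. Then `ζ^* δ_t` is a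
pushout of `δ_m` along a split mono, and its retraction pushes `δ_t` to `δ_m`. The statement for
`S'(X)` is dual.
-/

lemma IsIdempotentElem.eq_zero_or_eq_one_of_isLocalRing {R : Type*} [Ring R] [IsLocalRing R]
    {a : R} (h : IsIdempotentElem a) : a = 0 ∨ a = 1 := by
  rcases IsLocalRing.isUnit_or_isUnit_of_add_one (add_sub_cancel a 1) with hu | hu
  · exact .inr ((IsIdempotentElem.iff_eq_one_of_isUnit hu).1 h)
  · exact .inl ((hu.mul_right_eq_zero).1 h.one_sub_mul_self)

section KrullSchmidt

variable {C : Type u} [Category.{v} C] [Preadditive C]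

lemma isIso_or_isIso_id_sub {A : C} [IsLocalRing (End A)] (e : A ⟶ A) :
    IsIso e ∨ IsIso (𝟙 A - e) := by
  rw [← isUnit_iff_isIso, ← isUnit_iff_isIso]
  exact IsLocalRing.isUnit_or_isUnit_of_add_one (add_sub_cancel (show End A from e) 1)

lemma isLocalRing_end_of_iso {A B : C} (e : A ≅ B) [IsLocalRing (End B)] :
    IsLocalRing (End A) := by
  have := e.conj.toEquiv.nontrivial
  refine ⟨fun {a b} hab => ?_⟩
  have hconj : e.conj a + e.conj b = 1 := by
    rw [← map_one e.conj, ← hab]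
    change e.inv ≫ a ≫ e.hom + e.inv ≫ b ≫ e.hom = e.inv ≫ (a + b : A ⟶ A) ≫ e.hom
    rw [Preadditive.add_comp, Preadditive.comp_add]
  exact (IsLocalRing.isUnit_or_isUnit_of_add_one hconj).imp (isUnit_map_iff e.conj _).1
    (isUnit_map_iff e.conj _).1

variable [HasFiniteBiproducts C]

lemma indec_of_isLocalRing_end (A : C) [IsLocalRing (End A)] : Indec A := by
  refine ⟨fun hA => zero_ne_one (α := End A) (hA.eq_of_src _ _), fun Y Z ⟨e⟩ => ?_⟩
  let p : End A := e.hom ≫ biprod.fst ≫ biprod.inl ≫ e.inv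
  have hp : IsIdempotentElem p := by simp [IsIdempotentElem, p, End.mul_def]
  rcases hp.eq_zero_or_eq_one_of_isLocalRing with h | h
  · left
    rw [IsZero.iff_id_eq_zero]
    simpa [p] using congrArg (fun q : A ⟶ A => biprod.inl ≫ e.inv ≫ q ≫ e.hom ≫ biprod.fst) h
  · right
    rw [IsZero.iff_id_eq_zero]
    simpa [p] using
      (congrArg (fun q : A ⟶ A => biprod.inr ≫ e.inv ≫ q ≫ e.hom ≫ biprod.snd) h).symm

lemma exists_iso_of_indec_of_iso_biproduct {ι : Type} [Finite ι] {f : ι → C}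
    (hf : ∀ i, ¬ IsZero (f i)) {A : C} (hA : Indec A) (e : A ≅ ⨁ f) :
    ∃ i, Nonempty (A ≅ f i) := by
  obtain ⟨i⟩ : Nonempty ι := by
    by_contra hι
    have := Fintype.ofFinite ι
    rw [not_nonempty_iff] at hι
    refine hA.1 (IsZero.of_iso ?_ e)
    rw [IsZero.iff_id_eq_zero, ← biproduct.total]
    simp
  let s := biprod.uniqueUpToIso _ _
    (isBilimitBinaryBiconeOfIsSplitMonoOfCokernel (biproduct.isColimitToSubtype f i))
  rcases hA.2 _ _ ⟨e ≪≫ s⟩ with h | h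
  · exact absurd h (hf i)
  · exact ⟨i, ⟨e ≪≫ s ≪≫ (isoBiprodZero h).symm⟩⟩

lemma isLocalRing_end_of_indec (hKS : IsKrullSchmidt C) {A : C} (hA : Indec A) :
    IsLocalRing (End A) := by
  obtain ⟨n, f, hloc, ⟨e⟩⟩ := hKS A
  obtain ⟨i, ⟨e'⟩⟩ :=
    exists_iso_of_indec_of_iso_biproduct (fun i => (indec_of_isLocalRing_end (f i)).1) hA e
  exact isLocalRing_end_of_iso e'

lemma id_eq_sum_of_iso_biproduct {ι : Type} [Fintype ι] {V : C} {f : ι → C} (e : V ≅ ⨁ f) :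
    𝟙 V = ∑ i, (e.hom ≫ biproduct.π f i) ≫ (biproduct.ι f i ≫ e.inv) := by
  calc 𝟙 V = e.hom ≫ (∑ i, biproduct.π f i ≫ biproduct.ι f i) ≫ e.inv := by simp
    _ = _ := by simp only [Preadditive.sum_comp, Preadditive.comp_sum, Category.assoc]

end KrullSchmidt

section FiniteDimensionalHom

variable {K : Type w} [Field K]
variable {C : Type u} [Category.{v} C] [Preadditive C] [Linear K C]

theorem exists_hom_minimal_under_postcomp {ι : Type*} (obj : ι → C) {A₀ D : C}
    [FiniteDimensional K (A₀ ⟶ D)] (S : ∀ t, (A₀ ⟶ obj t) → Prop) (hS : ∃ t u, S t u)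
    (hD : ∀ t u, S t u → Nonempty (Retract (obj t) D)) :
    ∃ t u, S t u ∧ ∀ t' (g : obj t ⟶ obj t'), S t' (u ≫ g) →
      ∃ h : obj t' ⟶ obj t, u ≫ g ≫ h = u := by
  let V : (Σ t, A₀ ⟶ obj t) → Submodule K (A₀ ⟶ D) :=
    fun p => LinearMap.range (Linear.leftComp K D p.2)
  obtain ⟨_, ⟨⟨t, u⟩, hu, rfl⟩, hmin⟩ :=
    wellFounded_lt.has_min (V '' {p | S p.1 p.2}) (hS.elim fun t ⟨u, hu⟩ => ⟨_, ⟨t, u⟩, hu, rfl⟩)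
  refine ⟨t, u, hu, fun t' g hg => ?_⟩
  have hle : V ⟨t', u ≫ g⟩ ≤ V ⟨t, u⟩ := by
    rintro _ ⟨G, rfl⟩
    exact ⟨g ≫ G, by simp [Linear.leftComp]⟩
  have heq : V ⟨t', u ≫ g⟩ = V ⟨t, u⟩ := eq_of_le_of_not_lt hle (hmin _ ⟨_, hg, rfl⟩)
  obtain ⟨r⟩ := hD t u hu
  obtain ⟨G, hG⟩ : u ≫ r.i ∈ V ⟨t', u ≫ g⟩ := heq ▸ ⟨r.i, rfl⟩
  refine ⟨G ≫ r.r, ?_⟩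
  change (u ≫ g) ≫ G = u ≫ r.i at hG
  simp [reassoc_of% hG]

theorem exists_hom_minimal_under_precomp {ι : Type*} (obj : ι → C) {A₀ D : C}
    [FiniteDimensional K (D ⟶ A₀)] (S : ∀ t, (obj t ⟶ A₀) → Prop) (hS : ∃ t u, S t u)
    (hD : ∀ t u, S t u → Nonempty (Retract (obj t) D)) :
    ∃ t u, S t u ∧ ∀ t' (g : obj t' ⟶ obj t), S t' (g ≫ u) →
      ∃ h : obj t ⟶ obj t', h ≫ g ≫ u = u := by
  let V : (Σ t, obj t ⟶ A₀) → Submodule K (D ⟶ A₀) :=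
    fun p => LinearMap.range (Linear.rightComp K D p.2)
  obtain ⟨_, ⟨⟨t, u⟩, hu, rfl⟩, hmin⟩ :=
    wellFounded_lt.has_min (V '' {p | S p.1 p.2}) (hS.elim fun t ⟨u, hu⟩ => ⟨_, ⟨t, u⟩, hu, rfl⟩)
  refine ⟨t, u, hu, fun t' g hg => ?_⟩
  have hle : V ⟨t', g ≫ u⟩ ≤ V ⟨t, u⟩ := by
    rintro _ ⟨G, rfl⟩
    exact ⟨G ≫ g, by simp [Linear.rightComp]⟩
  have heq : V ⟨t', g ≫ u⟩ = V ⟨t, u⟩ := eq_of_le_of_not_lt hle (hmin _ ⟨_, hg, rfl⟩)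
  obtain ⟨r⟩ := hD t u hu
  obtain ⟨G, hG⟩ : r.r ≫ u ∈ V ⟨t', g ≫ u⟩ := heq ▸ ⟨r.r, rfl⟩
  refine ⟨r.i ≫ G, ?_⟩
  change G ≫ g ≫ u = r.r ≫ u at hG
  simp [hG]

end FiniteDimensionalHom

namespace ExtCat

variable {K : Type w} [Field K]
variable {C : Type u} [Category.{v} C] [Preadditive C] [HasFiniteBiproducts C]
variable (ξ : ExtCat K C)

@[simp] lemma push_id (c : C) {a : C} (δ : ξ.Ext c a) : ξ.push c (𝟙 a) δ = δ := by
  simp [push]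

lemma push_comp (c : C) {a a' a'' : C} (f : a ⟶ a') (g : a' ⟶ a'') (δ : ξ.Ext c a) :
    ξ.push c (f ≫ g) δ = ξ.push c g (ξ.push c f δ) := by
  simp [push]

@[simp] lemma pull_id {a c : C} (δ : ξ.Ext c a) : ξ.pull a (𝟙 c) δ = δ := by
  simp [pull]

lemma pull_comp {a c c' c'' : C} (g : c' ⟶ c) (g' : c'' ⟶ c') (δ : ξ.Ext c a) :
    ξ.pull a (g' ≫ g) δ = ξ.pull a g' (ξ.pull a g δ) := by
  simp [pull]

lemma pull_push {a a' c c' : C} (f : a ⟶ a') (g : c' ⟶ c) (δ : ξ.Ext c a) :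
    ξ.pull a' g (ξ.push c f δ) = ξ.push c' f (ξ.pull a g δ) :=
  ConcreteCategory.congr_hom ((ξ.E.map g.op).naturality f) δ

@[simp] lemma push_zero (c : C) {a a' : C} (f : a ⟶ a') : ξ.push c f (0 : ξ.Ext c a) = 0 :=
  map_zero _

@[simp] lemma pull_zero {a c c' : C} (g : c' ⟶ c) : ξ.pull a g (0 : ξ.Ext c a) = 0 :=
  map_zero _

@[simp] lemma zero_push (c : C) {a a' : C} (δ : ξ.Ext c a) : ξ.push c (0 : a ⟶ a') δ = 0 := by
  have := ξ.additive₂ (op c)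
  simp [push]

@[simp] lemma zero_pull {a c c' : C} (δ : ξ.Ext c a) : ξ.pull a (0 : c' ⟶ c) δ = 0 := by
  have := ξ.additive₁
  simp [pull]

lemma sub_push (c : C) {a a' : C} (f g : a ⟶ a') (δ : ξ.Ext c a) :
    ξ.push c (f - g) δ = ξ.push c f δ - ξ.push c g δ := by
  have := ξ.additive₂ (op c)
  simp [push]

lemma sub_pull {a c c' : C} (g g' : c' ⟶ c) (δ : ξ.Ext c a) :
    ξ.pull a (g - g') δ = ξ.pull a g δ - ξ.pull a g' δ := by
  have := ξ.additive₁
  simp [pull]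

lemma sum_push (c : C) {a a' : C} {ι : Type*} (s : Finset ι) (f : ι → (a ⟶ a'))
    (δ : ξ.Ext c a) : ξ.push c (∑ i ∈ s, f i) δ = ∑ i ∈ s, ξ.push c (f i) δ := by
  have := ξ.additive₂ (op c)
  simp [push]

lemma sum_pull {a c c' : C} {ι : Type*} (s : Finset ι) (g : ι → (c' ⟶ c))
    (δ : ξ.Ext c a) : ξ.pull a (∑ i ∈ s, g i) δ = ∑ i ∈ s, ξ.pull a (g i) δ := by
  have := ξ.additive₁
  simp [pull]

lemma pull_injective {a c c' : C} (g : c' ⟶ c) [IsIso g] : Function.Injective (ξ.pull a g) :=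
  fun δ δ' h => by simpa [← pull_comp] using congrArg (ξ.pull a (inv g)) h

lemma push_injective (c : C) {a a' : C} (f : a ⟶ a') [IsIso f] :
    Function.Injective (ξ.push c f) :=
  fun δ δ' h => by simpa [← push_comp] using congrArg (ξ.push c (inv f)) h

lemma exists_indec_push_ne_zero (hKS : IsKrullSchmidt C) {Z V : C} (δ : ξ.Ext Z V) (hδ : δ ≠ 0) :
    ∃ (W : C) (φ : V ⟶ W), Indec W ∧ ξ.push Z φ δ ≠ 0 := by
  obtain ⟨n, f, hloc, ⟨e⟩⟩ := hKS V
  by_contra! H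
  refine hδ ?_
  rw [← ξ.push_id Z δ, id_eq_sum_of_iso_biproduct e, sum_push]
  refine Finset.sum_eq_zero fun i _ => ?_
  have := hloc i
  rw [push_comp, H _ _ (indec_of_isLocalRing_end (f i)), push_zero]

lemma exists_indec_pull_ne_zero (hKS : IsKrullSchmidt C) {Z V : C} (δ : ξ.Ext V Z) (hδ : δ ≠ 0) :
    ∃ (W : C) (φ : W ⟶ V), Indec W ∧ ξ.pull Z φ δ ≠ 0 := by
  obtain ⟨n, f, hloc, ⟨e⟩⟩ := hKS V
  by_contra! H
  refine hδ ?_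
  rw [← ξ.pull_id δ, id_eq_sum_of_iso_biproduct e, sum_pull]
  refine Finset.sum_eq_zero fun i _ => ?_
  have := hloc i
  rw [pull_comp, H _ _ (indec_of_isLocalRing_end (f i)), pull_zero]

def IsLeftAlmostSplit {Z A : C} (δ : ξ.Ext Z A) : Prop :=
  ∀ ⦃V : C⦄ (a : A ⟶ V), ξ.push Z a δ ≠ 0 → IsSplitMono a

def IsRightAlmostSplit {Z A : C} (δ : ξ.Ext Z A) : Prop :=
  ∀ ⦃V : C⦄ (c : V ⟶ Z), ξ.pull A c δ ≠ 0 → IsSplitEpi c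

lemma isIso_of_push_eq_self {Z A : C} [IsLocalRing (End A)] {e : A ⟶ A} {δ : ξ.Ext Z A}
    (hδ : δ ≠ 0) (he : ξ.push Z e δ = δ) : IsIso e :=
  (isIso_or_isIso_id_sub e).resolve_right fun _ => hδ <| ξ.push_injective Z (𝟙 A - e) <| by
    rw [sub_push, push_id, he, sub_self, push_zero]

lemma isIso_of_pull_eq_self {Z A : C} [IsLocalRing (End Z)] {e : Z ⟶ Z} {δ : ξ.Ext Z A}
    (hδ : δ ≠ 0) (he : ξ.pull A e δ = δ) : IsIso e :=
  (isIso_or_isIso_id_sub e).resolve_right fun _ => hδ <| ξ.pull_injective (𝟙 Z - e) <| by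
    rw [sub_pull, pull_id, he, sub_self, pull_zero]

section Triangles

variable {A B Z : C} {x : A ⟶ B} {y : B ⟶ Z} {δ : ξ.Ext Z A}

lemma real_id_zero (M : C) : ξ.real (𝟙 M) (0 : M ⟶ 0) (0 : ξ.Ext 0 M) :=
  ξ.real_congr (isoBiprodZero (isZero_zero C)).symm (by simp)
    ((isZero_zero C).eq_of_tgt _ _) (ξ.real_zero M 0)

lemma real_zero_id (M : C) : ξ.real (0 : 0 ⟶ M) (𝟙 M) (0 : ξ.Ext M 0) :=
  ξ.real_congr (isoZeroBiprod (isZero_zero C)).symm ((isZero_zero C).eq_of_src _ _)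
    (by simp) (ξ.real_zero 0 M)

lemma pull_eq_zero_of_real (h : ξ.real x y δ) : ξ.pull A y δ = 0 := by
  obtain ⟨f, -, hf⟩ := ξ.et3op (g := y) (m := biprod.snd) (ξ.real_zero A B) h rfl
  exact hf.symm.trans (ξ.push_zero B f)

lemma push_eq_zero_of_real (h : ξ.real x y δ) : ξ.push Z x δ = 0 := by
  obtain ⟨g, -, hg⟩ := ξ.et3 (f := x) (m := biprod.inl) h (ξ.real_zero B Z) rfl
  exact hg.trans (ξ.pull_zero g)

lemma eq_zero_of_isSplitEpi (h : ξ.real x y δ) [IsSplitEpi y] : δ = 0 := by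
  rw [← ξ.pull_id δ, ← IsSplitEpi.id y, pull_comp, ξ.pull_eq_zero_of_real h, pull_zero]

lemma eq_zero_of_isSplitMono (h : ξ.real x y δ) [IsSplitMono x] : δ = 0 := by
  rw [← ξ.push_id Z δ, ← IsSplitMono.id x, push_comp, ξ.push_eq_zero_of_real h, push_zero]

lemma exists_desc_of_push_eq_zero (h : ξ.real x y δ) {M : C} (f : A ⟶ M)
    (hf : ξ.push Z f δ = 0) : ∃ g : B ⟶ M, x ≫ g = f := by
  obtain ⟨m, hm, -⟩ := ξ.real_lift f (𝟙 Z) h (ξ.real_zero M Z) (hf.trans (ξ.pull_zero _).symm)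
  exact ⟨m ≫ biprod.fst, by simp [reassoc_of% hm]⟩

lemma exists_lift_of_pull_eq_zero (h : ξ.real x y δ) {M : C} (v : M ⟶ Z)
    (hv : ξ.pull A v δ = 0) : ∃ k : M ⟶ B, k ≫ y = v := by
  obtain ⟨m, -, hm⟩ := ξ.real_lift (𝟙 A) v (ξ.real_zero A M) h ((ξ.push_zero M _).trans hv.symm)
  exact ⟨biprod.inr ≫ m, by simp [hm]⟩

lemma exists_desc (h : ξ.real x y δ) {M : C} (u : B ⟶ M) (hu : x ≫ u = 0) :
    ∃ w : Z ⟶ M, y ≫ w = u := by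
  obtain ⟨g, hg, -⟩ := ξ.et3 (f := 0) (m := u) h (ξ.real_zero_id M) (by simp [hu])
  exact ⟨g, by simpa using hg⟩

lemma exists_lift (h : ξ.real x y δ) {M : C} (v : M ⟶ B) (hv : v ≫ y = 0) :
    ∃ f : M ⟶ A, f ≫ x = v := by
  obtain ⟨f, hf, -⟩ := ξ.et3op (g := 0) (m := v) (ξ.real_id_zero M) h (by simp [hv])
  exact ⟨f, by simpa using hf.symm⟩

lemma exists_push_eq_of_pull_eq_zero (h : ξ.real x y δ) {M : C} (ε : ξ.Ext Z M)
    (hε : ξ.pull M y ε = 0) : ∃ f : A ⟶ M, ξ.push Z f δ = ε := by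
  obtain ⟨N, xε, yε, hr⟩ := ξ.real_exists ε
  obtain ⟨k, hk⟩ := ξ.exists_lift_of_pull_eq_zero hr y hε
  obtain ⟨f, -, hf⟩ := ξ.et3op (g := 𝟙 Z) (m := k) h hr (by simp [hk])
  exact ⟨f, hf.trans (ξ.pull_id ε)⟩

lemma exists_pull_eq_of_push_eq_zero (h : ξ.real x y δ) {M : C} (ε : ξ.Ext M A)
    (hε : ξ.push M x ε = 0) : ∃ g : M ⟶ Z, ξ.pull A g δ = ε := by
  obtain ⟨N, xε, yε, hr⟩ := ξ.real_exists ε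
  obtain ⟨k, hk⟩ := ξ.exists_desc_of_push_eq_zero hr x hε
  obtain ⟨g, -, hg⟩ := ξ.et3 (f := 𝟙 A) (m := k) hr h (by simp [hk])
  exact ⟨g, hg.symm.trans (ξ.push_id M ε)⟩

theorem exists_isIso_pull_eq_self_of_isLeftAlmostSplit [IsLocalRing (End Z)]
    (h : ξ.real x y δ) (hδ : δ ≠ 0) (hL : ξ.IsLeftAlmostSplit δ) {Y : C} (c : Y ⟶ Z)
    (hc : ξ.pull A c δ ≠ 0) :
    ∃ ζ : Z ⟶ Z, IsIso ζ ∧ ξ.pull A ζ δ = δ ∧ ∃ k : B ⟶ Y, y ≫ ζ = k ≫ c := by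
  obtain ⟨E, a, p, hε⟩ := ξ.real_exists (ξ.pull A c δ)
  obtain ⟨M, haM, hMy⟩ := ξ.real_lift (𝟙 A) c hε h (ξ.push_id Y _)
  have ha : ξ.push Z a δ = 0 := by
    by_contra ha
    have := hL a ha
    exact hc (ξ.eq_zero_of_isSplitMono hε)
  obtain ⟨l, hl⟩ := ξ.exists_desc_of_push_eq_zero h a ha
  obtain ⟨w, hw⟩ := ξ.exists_desc h (𝟙 B - l ≫ M) (by simp [reassoc_of% hl, haM])
  have hζ : IsIso (𝟙 Z - w ≫ y) := by
    refine (isIso_or_isIso_id_sub (w ≫ y)).resolve_left fun _ => hδ ?_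
    have : IsSplitEpi y := ⟨⟨inv (w ≫ y) ≫ w, by simp⟩⟩
    exact ξ.eq_zero_of_isSplitEpi h
  refine ⟨𝟙 Z - w ≫ y, hζ, ?_, l ≫ p, ?_⟩
  · rw [sub_pull, pull_id, pull_comp, ξ.pull_eq_zero_of_real h, pull_zero, sub_zero]
  · simp [Preadditive.comp_sub, reassoc_of% hw, hMy]

theorem exists_isIso_push_eq_self_of_isRightAlmostSplit [IsLocalRing (End A)]
    (h : ξ.real x y δ) (hδ : δ ≠ 0) (hR : ξ.IsRightAlmostSplit δ) {Y : C} (c : A ⟶ Y)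
    (hc : ξ.push Z c δ ≠ 0) :
    ∃ ζ : A ⟶ A, IsIso ζ ∧ ξ.push Z ζ δ = δ ∧ ∃ k : Y ⟶ B, ζ ≫ x = c ≫ k := by
  obtain ⟨E, a, p, hε⟩ := ξ.real_exists (ξ.push Z c δ)
  obtain ⟨M, hxM, hMp⟩ := ξ.real_lift c (𝟙 Z) h hε (ξ.pull_id _).symm
  have hp : ξ.pull A p δ = 0 := by
    by_contra hp
    have := hR p hp
    exact hc (ξ.eq_zero_of_isSplitEpi hε)
  obtain ⟨l, hl⟩ := ξ.exists_lift_of_pull_eq_zero h p hp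
  obtain ⟨w, hw⟩ := ξ.exists_lift h (𝟙 B - M ≫ l) (by simp [hl, hMp])
  have hζ : IsIso (𝟙 A - x ≫ w) := by
    refine (isIso_or_isIso_id_sub (x ≫ w)).resolve_left fun _ => hδ ?_
    have : IsSplitMono x :=
      ⟨⟨w ≫ inv (x ≫ w), by simpa only [Category.assoc] using IsIso.hom_inv_id (x ≫ w)⟩⟩
    exact ξ.eq_zero_of_isSplitMono h
  refine ⟨𝟙 A - x ≫ w, hζ, ?_, a ≫ l, ?_⟩
  · rw [sub_push, push_id, push_comp, ξ.push_eq_zero_of_real h, push_zero, sub_zero]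
  · simp [Preadditive.sub_comp, hw, reassoc_of% hxM]

theorem exists_push_eq_of_isLeftAlmostSplit [IsLocalRing (End Z)] (h : ξ.real x y δ)
    (hδ : δ ≠ 0) (hL : ξ.IsLeftAlmostSplit δ) {A' B' : C} {x' : A' ⟶ B'} {y' : B' ⟶ Z}
    {δ' : ξ.Ext Z A'} (h' : ξ.real x' y' δ') (hδ' : δ' ≠ 0) :
    ∃ f : A' ⟶ A, ξ.push Z f δ' = δ := by
  by_cases hc : ξ.pull A y' δ = 0
  · exact ξ.exists_push_eq_of_pull_eq_zero h' δ hc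
  obtain ⟨ζ, hζ, hζδ, k, hk⟩ := ξ.exists_isIso_pull_eq_self_of_isLeftAlmostSplit h hδ hL y' hc
  obtain ⟨f, hf⟩ := ξ.exists_push_eq_of_pull_eq_zero h (ξ.pull A' ζ δ')
    (by rw [← pull_comp, hk, pull_comp, ξ.pull_eq_zero_of_real h', pull_zero])
  have : IsSplitMono f := hL f <| hf ▸ fun h0 => hδ' <| ξ.pull_injective ζ <| h0.trans
    (ξ.pull_zero ζ).symm
  refine ⟨retraction f, ξ.pull_injective ζ ?_⟩
  rw [pull_push, ← hf, ← push_comp, IsSplitMono.id, push_id, hζδ]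

theorem exists_pull_eq_of_isRightAlmostSplit [IsLocalRing (End A)] (h : ξ.real x y δ)
    (hδ : δ ≠ 0) (hR : ξ.IsRightAlmostSplit δ) {B' Z' : C} {x' : A ⟶ B'} {y' : B' ⟶ Z'}
    {δ' : ξ.Ext Z' A} (h' : ξ.real x' y' δ') (hδ' : δ' ≠ 0) :
    ∃ g : Z ⟶ Z', ξ.pull A g δ' = δ := by
  by_cases hc : ξ.push Z x' δ = 0
  · exact ξ.exists_pull_eq_of_push_eq_zero h' δ hc
  obtain ⟨ζ, hζ, hζδ, k, hk⟩ := ξ.exists_isIso_push_eq_self_of_isRightAlmostSplit h hδ hR x' hc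
  obtain ⟨g, hg⟩ := ξ.exists_pull_eq_of_push_eq_zero h (ξ.push Z' ζ δ')
    (by rw [← push_comp, hk, push_comp, ξ.push_eq_zero_of_real h', push_zero])
  have : IsSplitEpi g := hR g <| hg ▸ fun h0 => hδ' <| ξ.push_injective Z' ζ <| h0.trans
    (ξ.push_zero Z' ζ).symm
  refine ⟨section_ g, ξ.push_injective Z ζ ?_⟩
  rw [← pull_push, ← hg, ← pull_comp, IsSplitEpi.id, pull_id, hζδ]

end Triangles

end ExtCat

section Terms

variable {K : Type w} [Field K]
variable {C : Type u} [Category.{v} C] [Preadditive C] [HasFiniteBiproducts C]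
variable {ξ : ExtCat K C} {X : C}

def STerm.ofExt {A : C} (δ : ξ.Ext X A) (hδ : δ ≠ 0) (hA : Indec A) : STerm ξ X where
  A := A
  B := (ξ.real_exists δ).choose
  f := (ξ.real_exists δ).choose_spec.choose
  g := (ξ.real_exists δ).choose_spec.choose_spec.choose
  δ := δ
  isReal := (ξ.real_exists δ).choose_spec.choose_spec.choose_spec
  nonsplit := hδ
  indec := hA

def SPrimeTerm.ofExt {A : C} (δ : ξ.Ext A X) (hδ : δ ≠ 0) (hA : Indec A) : SPrimeTerm ξ X where
  A := A
  B := (ξ.real_exists δ).choose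
  f := (ξ.real_exists δ).choose_spec.choose
  g := (ξ.real_exists δ).choose_spec.choose_spec.choose
  δ := δ
  isReal := (ξ.real_exists δ).choose_spec.choose_spec.choose_spec
  nonsplit := hδ
  indec := hA

lemma STerm.nonempty_of_not_projObj (hKS : IsKrullSchmidt C) (hX : ¬ ξ.ProjObj X) :
    Nonempty (STerm ξ X) := by
  obtain ⟨V, δ, hδ⟩ : ∃ (V : C) (δ : ξ.Ext X V), δ ≠ 0 := by
    simpa [ExtCat.ProjObj] using hX
  obtain ⟨W, φ, hW, hφ⟩ := ξ.exists_indec_push_ne_zero hKS δ hδ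
  exact ⟨.ofExt _ hφ hW⟩

lemma SPrimeTerm.nonempty_of_not_injObj (hKS : IsKrullSchmidt C) (hX : ¬ ξ.InjObj X) :
    Nonempty (SPrimeTerm ξ X) := by
  obtain ⟨V, δ, hδ⟩ : ∃ (V : C) (δ : ξ.Ext V X), δ ≠ 0 := by
    simpa [ExtCat.InjObj] using hX
  obtain ⟨W, φ, hW, hφ⟩ := ξ.exists_indec_pull_ne_zero hKS δ hδ
  exact ⟨.ofExt _ hφ hW⟩

def STerm.IsMinimal (m : STerm ξ X) : Prop := ∀ t : STerm ξ X, m.Gt t → t.Gt m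

def SPrimeTerm.IsMinimal (m : SPrimeTerm ξ X) : Prop := ∀ t : SPrimeTerm ξ X, m.Gt t → t.Gt m

theorem STerm.exists_isMinimal [Linear K C] (homFin : ∀ X Y : C, FiniteDimensional K (X ⟶ Y))
    (hLF : LocFinite C) (s₀ : STerm ξ X) : ∃ m : STerm ξ X, m.IsMinimal := by
  obtain ⟨⟨n, ind, hind⟩, -⟩ := hLF s₀.A s₀.indec
  have := homFin s₀.A (⨁ ind)
  obtain ⟨m, um, hum, hback⟩ := exists_hom_minimal_under_postcomp (K := K) STerm.A (D := ⨁ ind)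
    (fun t u => ξ.push X u s₀.δ = t.δ) ⟨s₀, 𝟙 _, ξ.push_id X _⟩ fun t u hu => by
      obtain ⟨i, ⟨e⟩⟩ := hind t.A t.indec ⟨u, fun h0 => t.nonsplit (by simp [← hu, h0])⟩
      exact ⟨⟨e.hom ≫ biproduct.ι ind i, biproduct.π ind i ≫ e.inv, by simp⟩⟩
  refine ⟨m, fun t ⟨g, hg⟩ => ?_⟩
  obtain ⟨h, hh⟩ := hback t g (by rw [ξ.push_comp, hum, hg])
  exact ⟨h, by rw [← hg, ← hum, ← ξ.push_comp, ← ξ.push_comp, hh]⟩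

theorem SPrimeTerm.exists_isMinimal [Linear K C]
    (homFin : ∀ X Y : C, FiniteDimensional K (X ⟶ Y)) (hLF : LocFinite C) (s₀ : SPrimeTerm ξ X) :
    ∃ m : SPrimeTerm ξ X, m.IsMinimal := by
  obtain ⟨-, ⟨n, ind, hind⟩⟩ := hLF s₀.A s₀.indec
  have := homFin (⨁ ind) s₀.A
  obtain ⟨m, um, hum, hback⟩ := exists_hom_minimal_under_precomp (K := K) SPrimeTerm.A
    (D := ⨁ ind) (fun t u => ξ.pull X u s₀.δ = t.δ) ⟨s₀, 𝟙 _, ξ.pull_id _⟩ fun t u hu => by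
      obtain ⟨i, ⟨e⟩⟩ := hind t.A t.indec ⟨u, fun h0 => t.nonsplit (by simp [← hu, h0])⟩
      exact ⟨⟨e.hom ≫ biproduct.ι ind i, biproduct.π ind i ≫ e.inv, by simp⟩⟩
  refine ⟨m, fun t ⟨g, hg⟩ => ?_⟩
  obtain ⟨h, hh⟩ := hback t g (by rw [ξ.pull_comp, hum, hg])
  exact ⟨h, by rw [← hg, ← hum, ← ξ.pull_comp, ← ξ.pull_comp, Category.assoc, hh]⟩

theorem STerm.IsMinimal.isLeftAlmostSplit (hKS : IsKrullSchmidt C) {m : STerm ξ X}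
    (hm : m.IsMinimal) : ξ.IsLeftAlmostSplit m.δ := by
  intro V a ha
  obtain ⟨W, φ, hW, hφ⟩ := ξ.exists_indec_push_ne_zero hKS _ ha
  rw [← ξ.push_comp] at hφ
  obtain ⟨h, hh⟩ : ∃ h : W ⟶ m.A, ξ.push X h (ξ.push X (a ≫ φ) m.δ) = m.δ :=
    hm (.ofExt _ hφ hW) ⟨a ≫ φ, rfl⟩
  have := isLocalRing_end_of_indec hKS m.indec
  have : IsIso (a ≫ φ ≫ h) :=
    ξ.isIso_of_push_eq_self m.nonsplit (by rwa [← Category.assoc, ξ.push_comp])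
  exact ⟨⟨φ ≫ h ≫ inv (a ≫ φ ≫ h),
    by simpa only [Category.assoc] using IsIso.hom_inv_id (a ≫ φ ≫ h)⟩⟩

theorem SPrimeTerm.IsMinimal.isRightAlmostSplit (hKS : IsKrullSchmidt C) {m : SPrimeTerm ξ X}
    (hm : m.IsMinimal) : ξ.IsRightAlmostSplit m.δ := by
  intro V c hc
  obtain ⟨W, φ, hW, hφ⟩ := ξ.exists_indec_pull_ne_zero hKS _ hc
  rw [← ξ.pull_comp] at hφ
  obtain ⟨h, hh⟩ : ∃ h : m.A ⟶ W, ξ.pull X h (ξ.pull X (φ ≫ c) m.δ) = m.δ :=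
    hm (.ofExt _ hφ hW) ⟨φ ≫ c, rfl⟩
  have := isLocalRing_end_of_indec hKS m.indec
  have : IsIso (h ≫ φ ≫ c) :=
    ξ.isIso_of_pull_eq_self m.nonsplit (by rwa [ξ.pull_comp])
  exact ⟨⟨inv (h ≫ φ ≫ c) ≫ h ≫ φ, by simp⟩⟩

theorem STerm.IsMinimal.gt (hKS : IsKrullSchmidt C) (hX : Indec X) {m : STerm ξ X}
    (hm : m.IsMinimal) (t : STerm ξ X) : t.Gt m :=
  have := isLocalRing_end_of_indec hKS hX
  ξ.exists_push_eq_of_isLeftAlmostSplit m.isReal m.nonsplit (hm.isLeftAlmostSplit hKS)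
    t.isReal t.nonsplit

theorem SPrimeTerm.IsMinimal.gt (hKS : IsKrullSchmidt C) (hX : Indec X) {m : SPrimeTerm ξ X}
    (hm : m.IsMinimal) (t : SPrimeTerm ξ X) : t.Gt m :=
  have := isLocalRing_end_of_indec hKS hX
  ξ.exists_pull_eq_of_isRightAlmostSplit m.isReal m.nonsplit (hm.isRightAlmostSplit hKS)
    t.isReal t.nonsplit

end Terms

theorem stmt2_general (K : Type w) [Field K] (C : Type u) [Category.{v} C] [Preadditive C]
    [Linear K C] [HasFiniteBiproducts C] (hKS : IsKrullSchmidt C) (ξ : ExtCat K C)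
    (homFin : ∀ X Y : C, FiniteDimensional K (X ⟶ Y))
    (hLF : LocFinite C) (X : C) (hX : Indec X) :
    (¬ ξ.ProjObj X → ∃ s : STerm ξ X, ∀ t : STerm ξ X, t.Gt s) ∧
    (¬ ξ.InjObj X → ∃ s : SPrimeTerm ξ X, ∀ t : SPrimeTerm ξ X, t.Gt s) := by
  constructor
  · intro hP
    obtain ⟨s₀⟩ := STerm.nonempty_of_not_projObj hKS hP
    obtain ⟨m, hm⟩ := STerm.exists_isMinimal homFin hLF s₀
    exact ⟨m, hm.gt hKS hX⟩
  · intro hI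
    obtain ⟨s₀⟩ := SPrimeTerm.nonempty_of_not_injObj hKS hI
    obtain ⟨m, hm⟩ := SPrimeTerm.exists_isMinimal homFin hLF s₀
    exact ⟨m, hm.gt hKS hX⟩

theorem stmt2 (K : Type w) [Field K] (C : Type u) [Category.{v} C] [Preadditive C]
    [Linear K C] [HasFiniteBiproducts C] (hKS : IsKrullSchmidt C) (ξ : ExtCat K C)
    (homFin : ∀ X Y : C, FiniteDimensional K (X ⟶ Y))
    (extFin : ∀ X Y : C, FiniteDimensional K (ξ.Ext X Y))
    (hLF : LocFinite C) (X : C) (hX : Indec X) :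
    (¬ ξ.ProjObj X → ∃ s : STerm ξ X, ∀ t : STerm ξ X, t.Gt s) ∧
    (¬ ξ.InjObj X → ∃ s : SPrimeTerm ξ X, ∀ t : SPrimeTerm ξ X, t.Gt s) :=
  stmt2_general K C hKS ξ homFin hLF X hX
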